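/- Assume μ satisfies Dalang's condition ∫_{ℝ^d} (1+|ξ|²)^{−1} μ(dξ) < ∞. Then for every t > 0 and every γ > 0, the series H(t;γ) := ∑_{n≥0} γ^n h_n(t) converges, i.e. H(t;γ) < ∞. -/

import Mathlib

open MeasureTheory Real ENNReal

/-- `k(t) = ∫_{ℝ^d} e^{-t |ξ|²} μ(dξ)`. -/
noncomputable def heatK {d : ℕ} (μ : Measure (EuclideanSpace ℝ (Fin d))) (t : ℝ) : ℝ≥0∞ :=
  ∫⁻ ξ, ENNReal.ofReal (Real.exp (-t * ‖ξ‖ ^ 2)) ∂μ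

/-- `h_0(t) = 1` and, for `n = m + 1 ≥ 1`,
`h_n(t) = ∫_{0 < t_1 < ⋯ < t_n < t} k(t_2 - t_1) ⋯ k(t_n - t_{n-1}) k(t - t_n) dt_1 ⋯ dt_n`. -/
noncomputable def hSeq {d : ℕ} (μ : Measure (EuclideanSpace ℝ (Fin d))) : ℕ → ℝ → ℝ≥0∞
  | 0, _ => 1
  | (m + 1), t =>
    ∫⁻ s in {s : Fin (m + 1) → ℝ | StrictMono s ∧ 0 < s 0 ∧ s (Fin.last m) < t},
      (∏ j : Fin m, heatK μ (s j.succ - s j.castSucc)) * heatK μ (t - s (Fin.last m))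

/-! Put `K(β) = ∫_0^∞ e^{-βs} k(s) ds`. By Tonelli, `K(β) = ∫ (β + |ξ|²)⁻¹ μ(dξ)`, which tends
to `0` as `β → ∞` by dominated convergence under Dalang's condition (the condition also makes
`μ` σ-finite, so Tonelli applies). Splitting off the last time variable gives the renewal recursion
`h_{n+1}(t) = ∫_0^t h_n(s) k(t - s) ds`, whence `h_n(t) ≤ e^{βt} K(β)^n` by induction. Choosing `β`
with `γ K(β) < 1` bounds `H(t;γ)` by a convergent geometric series. -/

open Set Filter Topology

theorem sigmaFinite_of_lintegral_ne_top {α : Type*} [MeasurableSpace α] {μ : Measure α}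
    {f : α → ℝ≥0∞} (hf : AEMeasurable f μ) (hf_ne_zero : ∀ᵐ x ∂μ, f x ≠ 0)
    (hf_int : ∫⁻ x, f x ∂μ ≠ ∞) : SigmaFinite μ := by
  have : IsFiniteMeasure (μ.withDensity f) := isFiniteMeasure_withDensity hf_int
  have : SigmaFinite ((μ.withDensity f).withDensity fun x ↦ (f x)⁻¹) :=
    SigmaFinite.withDensity_of_ne_top <| (withDensity_absolutelyContinuous μ f).ae_le <|
      hf_ne_zero.mono fun x hx ↦ ENNReal.inv_ne_top.2 hx
  rwa [withDensity_inv_same₀ hf hf_ne_zero ((ae_lt_top' hf hf_int).mono fun x hx ↦ hx.ne)]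
    at this

theorem lintegral_exp_neg_mul_Ioi {c : ℝ} (hc : 0 < c) :
    ∫⁻ s in Ioi 0, ENNReal.ofReal (exp (-(c * s))) = ENNReal.ofReal c⁻¹ := by
  rw [← ofReal_integral_eq_lintegral_ofReal _ (ae_of_all _ fun _ ↦ (exp_pos _).le)]
  · have h := integral_comp_mul_left_Ioi (fun u ↦ exp (-u)) 0 hc
    simp only [mul_zero, integral_exp_neg_Ioi_zero, smul_eq_mul, mul_one] at h
    rw [h]
  · simpa [neg_mul, IntegrableOn] using exp_neg_integrableOn_Ioi 0 hc

theorem setLIntegral_Ioo_comp_const_sub (g : ℝ → ℝ≥0∞) (t : ℝ) :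
    ∫⁻ x in Ioo 0 t, g (t - x) = ∫⁻ x in Ioo 0 t, g x := by
  simpa [preimage_const_sub_Ioo] using
    (Measure.measurePreserving_sub_left volume t).setLIntegral_comp_preimage_emb
      (MeasurableEquiv.subLeft t).measurableEmbedding g (Ioo 0 t)

theorem Fin.strictMono_snoc_iff {α : Type*} [Preorder α] {n : ℕ} {y : Fin (n + 1) → α} {x : α} :
    StrictMono (Fin.snoc y x : Fin (n + 2) → α) ↔ StrictMono y ∧ y (Fin.last n) < x := by
  simp only [Fin.strictMono_iff_lt_succ, Fin.forall_fin_succ', Fin.succ_castSucc,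
    Fin.snoc_castSucc, Fin.succ_last, Fin.snoc_last]

theorem measurableSet_strictMono {n : ℕ} : MeasurableSet {s : Fin n → ℝ | StrictMono s} := by
  simp only [StrictMono, ofPred_forall]
  exact .iInter fun i ↦ .iInter fun j ↦ .iInter fun _ ↦
    measurableSet_lt (measurable_pi_apply i) (measurable_pi_apply j)

section HeatKernel

variable {d : ℕ} (μ : Measure (EuclideanSpace ℝ (Fin d)))

theorem antitone_heatK : Antitone (heatK μ) := fun _ _ hab ↦
  lintegral_mono fun ξ ↦ ENNReal.ofReal_le_ofReal <| exp_le_exp.2 <| by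
    nlinarith [sq_nonneg ‖ξ‖]

theorem measurable_heatK : Measurable (heatK μ) := (antitone_heatK μ).measurable

noncomputable def heatKLaplace (β : ℝ) : ℝ≥0∞ :=
  ∫⁻ s in Ioi 0, ENNReal.ofReal (exp (-β * s)) * heatK μ s

theorem heatKLaplace_eq [SFinite μ] {β : ℝ} (hβ : 0 < β) :
    heatKLaplace μ β = ∫⁻ ξ, ENNReal.ofReal ((β + ‖ξ‖ ^ 2)⁻¹) ∂μ := by
  have hmerge : ∀ s, ENNReal.ofReal (exp (-β * s)) * heatK μ s =
      ∫⁻ ξ, ENNReal.ofReal (exp (-((β + ‖ξ‖ ^ 2) * s))) ∂μ := fun s ↦ by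
    rw [heatK, ← lintegral_const_mul _ (by fun_prop)]
    congr 1 with ξ
    rw [← ENNReal.ofReal_mul (exp_pos _).le, ← exp_add]
    ring_nf
  simp_rw [heatKLaplace, hmerge]
  rw [lintegral_lintegral_swap (by fun_prop)]
  congr 1 with ξ
  exact lintegral_exp_neg_mul_Ioi (by positivity)

theorem tendsto_heatKLaplace_atTop
    (hDalang : ∫⁻ ξ, ENNReal.ofReal ((1 + ‖ξ‖ ^ 2)⁻¹) ∂μ ≠ ∞) :
    Tendsto (heatKLaplace μ) atTop (𝓝 0) := by
  have : SigmaFinite μ := sigmaFinite_of_lintegral_ne_top (by fun_prop)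
    (ae_of_all _ fun ξ ↦ by positivity) hDalang
  have hlim : Tendsto (fun β : ℝ ↦ ∫⁻ ξ, ENNReal.ofReal ((β + ‖ξ‖ ^ 2)⁻¹) ∂μ) atTop
      (𝓝 (∫⁻ _, 0 ∂μ)) := by
    refine tendsto_lintegral_filter_of_dominated_convergence _
      (.of_forall fun _ ↦ by fun_prop) ?_ hDalang (ae_of_all _ fun ξ ↦ ?_)
    · filter_upwards [eventually_ge_atTop 1] with β hβ
      exact ae_of_all _ fun ξ ↦ ENNReal.ofReal_le_ofReal <|
        inv_anti₀ (by positivity) (by linarith)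
    · simpa using ENNReal.tendsto_ofReal (tendsto_inv_atTop_zero.comp
        (tendsto_atTop_add_const_right _ (‖ξ‖ ^ 2) tendsto_id))
  rw [lintegral_zero] at hlim
  exact hlim.congr' <| (eventually_gt_atTop 0).mono fun β hβ ↦ (heatKLaplace_eq μ hβ).symm

def orderedSimplex (n : ℕ) (t : ℝ) : Set (Fin (n + 1) → ℝ) :=
  {s | StrictMono s ∧ 0 < s 0 ∧ s (Fin.last n) < t}

noncomputable def simplexWeight (n : ℕ) (t : ℝ) (s : Fin (n + 1) → ℝ) : ℝ≥0∞ :=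
  (∏ j : Fin n, heatK μ (s j.succ - s j.castSucc)) * heatK μ (t - s (Fin.last n))

theorem hSeq_succ_eq_setLIntegral (n : ℕ) (t : ℝ) :
    hSeq μ (n + 1) t = ∫⁻ s in orderedSimplex n t, simplexWeight μ n t s := rfl

theorem measurableSet_orderedSimplex (n : ℕ) (t : ℝ) : MeasurableSet (orderedSimplex n t) :=
  measurableSet_strictMono.inter <|
    (measurableSet_lt measurable_const (measurable_pi_apply 0)).inter
      (measurableSet_lt (measurable_pi_apply _) measurable_const)

theorem measurable_simplexWeight (n : ℕ) (t : ℝ) : Measurable (simplexWeight μ n t) := by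
  have hk := measurable_heatK μ
  unfold simplexWeight
  fun_prop

theorem snoc_mem_orderedSimplex_iff {n : ℕ} {t x : ℝ} {y : Fin (n + 1) → ℝ} :
    (Fin.snoc y x : Fin (n + 2) → ℝ) ∈ orderedSimplex (n + 1) t ↔
      y ∈ orderedSimplex n x ∧ x ∈ Ioo 0 t := by
  simp only [orderedSimplex, mem_ofPred_eq, mem_Ioo, Fin.strictMono_snoc_iff, Fin.snoc_last]
  rw [show (0 : Fin (n + 2)) = (0 : Fin (n + 1)).castSucc from rfl, Fin.snoc_castSucc]
  constructor
  · rintro ⟨⟨hy, hx⟩, h0, ht⟩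
    exact ⟨⟨hy, h0, hx⟩, h0.trans_le (hy.monotone (Fin.zero_le _)) |>.trans hx, ht⟩
  · rintro ⟨⟨hy, h0, hx⟩, -, ht⟩
    exact ⟨⟨hy, hx⟩, h0, ht⟩

theorem simplexWeight_snoc (n : ℕ) (t x : ℝ) (y : Fin (n + 1) → ℝ) :
    simplexWeight μ (n + 1) t (Fin.snoc y x) = simplexWeight μ n x y * heatK μ (t - x) := by
  simp only [simplexWeight, Fin.prod_univ_castSucc, Fin.succ_castSucc, Fin.snoc_castSucc,
    Fin.succ_last, Fin.snoc_last]

theorem indicator_orderedSimplex_snoc (n : ℕ) (t x : ℝ) (y : Fin (n + 1) → ℝ) :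
    (orderedSimplex (n + 1) t).indicator (simplexWeight μ (n + 1) t) (Fin.snoc y x) =
      (orderedSimplex n x).indicator (simplexWeight μ n x) y *
        (Ioo 0 t).indicator (fun x ↦ heatK μ (t - x)) x := by
  by_cases hy : y ∈ orderedSimplex n x <;> by_cases hx : x ∈ Ioo 0 t <;>
    simp [indicator, snoc_mem_orderedSimplex_iff, simplexWeight_snoc, hx, hy]

theorem hSeq_one (t : ℝ) : hSeq μ 1 t = ∫⁻ x in Ioo 0 t, heatK μ (t - x) := by
  have hsimplex : orderedSimplex 0 t = MeasurableEquiv.funUnique (Fin 1) ℝ ⁻¹' Ioo 0 t := by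
    ext s
    simp [orderedSimplex, Fin.strictMono_iff_lt_succ]
  rw [hSeq_succ_eq_setLIntegral, hsimplex]
  simp only [simplexWeight, Finset.univ_eq_empty, Finset.prod_empty, one_mul]
  exact (volume_preserving_funUnique (Fin 1) ℝ).setLIntegral_comp_preimage_emb
      (MeasurableEquiv.funUnique (Fin 1) ℝ).measurableEmbedding (fun x ↦ heatK μ (t - x)) _

theorem hSeq_succ_succ (n : ℕ) (t : ℝ) :
    hSeq μ (n + 2) t = ∫⁻ x in Ioo 0 t, hSeq μ (n + 1) x * heatK μ (t - x) := by
  set F := (orderedSimplex (n + 1) t).indicator (simplexWeight μ (n + 1) t)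
  set E := MeasurableEquiv.piFinSuccAbove (fun _ : Fin (n + 2) ↦ ℝ) (Fin.last (n + 1))
  have hF : Measurable F :=
    (measurable_simplexWeight μ _ _).indicator (measurableSet_orderedSimplex _ _)
  have hE : ∀ p, E.symm p = Fin.snoc p.2 p.1 := fun p ↦ by
    simp [E, MeasurableEquiv.piFinSuccAbove_symm_apply, Fin.insertNthEquiv]
  calc hSeq μ (n + 2) t = ∫⁻ s, F s :=
        (lintegral_indicator (measurableSet_orderedSimplex _ _) _).symm
    _ = ∫⁻ x, ∫⁻ y, F (E.symm (x, y)) := by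
        rw [← ((volume_preserving_piFinSuccAbove _ _).symm E).lintegral_comp_emb
          E.symm.measurableEmbedding, Measure.volume_eq_prod]
        exact lintegral_prod _ (hF.comp E.symm.measurable).aemeasurable
    _ = ∫⁻ x, hSeq μ (n + 1) x * (Ioo 0 t).indicator (fun x ↦ heatK μ (t - x)) x := by
        congr 1 with x
        simp only [hE, F, indicator_orderedSimplex_snoc]
        rw [lintegral_mul_const _ ((measurable_simplexWeight μ _ _).indicator
          (measurableSet_orderedSimplex _ _)),
          lintegral_indicator (measurableSet_orderedSimplex _ _), ← hSeq_succ_eq_setLIntegral]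
    _ = ∫⁻ x in Ioo 0 t, hSeq μ (n + 1) x * heatK μ (t - x) := by
        simp_rw [← indicator_mul_right]
        exact lintegral_indicator measurableSet_Ioo _

theorem hSeq_succ (n : ℕ) (t : ℝ) :
    hSeq μ (n + 1) t = ∫⁻ x in Ioo 0 t, hSeq μ n x * heatK μ (t - x) := by
  cases n with
  | zero => simpa [hSeq] using hSeq_one μ t
  | succ n => exact hSeq_succ_succ μ n t

theorem hSeq_le_exp_mul_heatKLaplace_pow {β : ℝ} (hβ : 0 ≤ β) (n : ℕ) {t : ℝ} (ht : 0 ≤ t) :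
    hSeq μ n t ≤ ENNReal.ofReal (exp (β * t)) * heatKLaplace μ β ^ n := by
  induction n generalizing t with
  | zero =>
    simpa [hSeq] using ENNReal.one_le_ofReal.2 (one_le_exp (by positivity))
  | succ n ih =>
    have hsplit : ∀ x, ENNReal.ofReal (exp (β * x)) =
        ENNReal.ofReal (exp (β * t)) * ENNReal.ofReal (exp (-β * (t - x))) := fun x ↦ by
      rw [← ENNReal.ofReal_mul (exp_pos _).le, ← exp_add]
      ring_nf
    have hmeas : Measurable fun x ↦ ENNReal.ofReal (exp (-β * (t - x))) * heatK μ (t - x) := by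
      have := measurable_heatK μ
      fun_prop
    calc hSeq μ (n + 1) t = ∫⁻ x in Ioo 0 t, hSeq μ n x * heatK μ (t - x) := hSeq_succ μ n t
      _ ≤ ∫⁻ x in Ioo 0 t, ENNReal.ofReal (exp (β * t)) * heatKLaplace μ β ^ n *
            (ENNReal.ofReal (exp (-β * (t - x))) * heatK μ (t - x)) := by
        refine setLIntegral_mono' measurableSet_Ioo fun x hx ↦ ?_
        calc hSeq μ n x * heatK μ (t - x)
            ≤ ENNReal.ofReal (exp (β * x)) * heatKLaplace μ β ^ n * heatK μ (t - x) :=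
              mul_le_mul_left (ih hx.1.le) _
          _ = _ := by rw [hsplit]; ring
      _ = ENNReal.ofReal (exp (β * t)) * heatKLaplace μ β ^ n *
            ∫⁻ x in Ioo 0 t, ENNReal.ofReal (exp (-β * (t - x))) * heatK μ (t - x) :=
        lintegral_const_mul _ hmeas
      _ ≤ ENNReal.ofReal (exp (β * t)) * heatKLaplace μ β ^ n * heatKLaplace μ β := by
        gcongr
        rw [setLIntegral_Ioo_comp_const_sub (fun u ↦ ENNReal.ofReal (exp (-β * u)) * heatK μ u)]
        exact lintegral_mono_set Ioo_subset_Ioi_self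
      _ = ENNReal.ofReal (exp (β * t)) * heatKLaplace μ β ^ (n + 1) := by ring

end HeatKernel

theorem H_series_converges_general (d : ℕ)
    (μ : Measure (EuclideanSpace ℝ (Fin d)))
    (hDalang : ∫⁻ ξ, ENNReal.ofReal ((1 + ‖ξ‖ ^ 2)⁻¹) ∂μ < ⊤) :
    ∀ t γ : ℝ, 0 < t → 0 < γ →
      (∑' n : ℕ, (ENNReal.ofReal γ) ^ n * hSeq μ n t) < ⊤ := by
  intro t γ ht _
  obtain ⟨β, hβγ, hβ⟩ : ∃ β, ENNReal.ofReal γ * heatKLaplace μ β < 1 ∧ 0 ≤ β := by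
    have hlim := ENNReal.Tendsto.const_mul (tendsto_heatKLaplace_atTop μ hDalang.ne)
      (.inr ofReal_ne_top) (a := ENNReal.ofReal γ)
    rw [mul_zero] at hlim
    exact ((hlim.eventually (gt_mem_nhds one_pos)).and (eventually_ge_atTop 0)).exists
  calc ∑' n, ENNReal.ofReal γ ^ n * hSeq μ n t
      ≤ ∑' n, ENNReal.ofReal γ ^ n * (ENNReal.ofReal (exp (β * t)) * heatKLaplace μ β ^ n) :=
        ENNReal.tsum_le_tsum fun n ↦
          mul_le_mul_right (hSeq_le_exp_mul_heatKLaplace_pow μ hβ n ht.le) _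
    _ = ENNReal.ofReal (exp (β * t)) * ∑' n, (ENNReal.ofReal γ * heatKLaplace μ β) ^ n := by
        rw [← ENNReal.tsum_mul_left]
        congr 1 with n
        ring
    _ < ⊤ := by
        rw [ENNReal.tsum_geometric]
        exact ENNReal.mul_lt_top ofReal_lt_top (ENNReal.inv_lt_top.2 (tsub_pos_of_lt hβγ))

/-- Under Dalang's condition, `H(t;γ) = ∑_n γ^n h_n(t) < ∞` for all `t > 0`, `γ > 0`. -/
theorem H_series_converges (d : ℕ) (hd : 1 ≤ d)
    (μ : Measure (EuclideanSpace ℝ (Fin d)))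
    (hDalang : ∫⁻ ξ, ENNReal.ofReal ((1 + ‖ξ‖ ^ 2)⁻¹) ∂μ < ⊤) :
    ∀ t γ : ℝ, 0 < t → 0 < γ →
      (∑' n : ℕ, (ENNReal.ofReal γ) ^ n * hSeq μ n t) < ⊤ :=
  H_series_converges_general d μ hDalang
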